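/- Let μ, σ² : [0,T] → ℝ be Lipschitz with constant L, with σ²(t) ≥ ν > 0 for all t. Then there is a constant C = C(T, ν, L) such that for all s, t ∈ [0,T], ∫_ℝ |G(x, μ(t), σ²(t)) - G(x, μ(s), σ²(s))|² dx ≤ C |t - s|², where G(x, μ, σ²) is the Gaussian density with mean μ and variance σ². -/

import Mathlib

open MeasureTheory

/-- The Gaussian probability density with mean `μ` and variance `s2`. -/
noncomputable def gaussianDensity (x μ s2 : ℝ) : ℝ :=
  (Real.sqrt (2 * Real.pi * s2))⁻¹ * Real.exp (-(x - μ) ^ 2 / (2 * s2))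

lemma integrable_exp_shift (p q : ℝ) (hp : 0 < p) :
    Integrable (fun x : ℝ => Real.exp (-p * (x - q) ^ 2)) :=
  (integrable_exp_neg_mul_sq hp).comp_sub_right q

lemma integral_exp_shift (p q : ℝ) (hp : 0 < p) :
    ∫ x : ℝ, Real.exp (-p * (x - q) ^ 2) = Real.sqrt (Real.pi / p) := by
  rw [MeasureTheory.integral_sub_right_eq_self (fun x => Real.exp (-p * x ^ 2)) q]
  exact integral_gaussian p

lemma gaussian_prod (x μ₁ μ₂ a b : ℝ) (ha : 0 < a) (hb : 0 < b) :
    gaussianDensity x μ₁ a * gaussianDensity x μ₂ b =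
      ((Real.sqrt (2*Real.pi*a))⁻¹ * (Real.sqrt (2*Real.pi*b))⁻¹ *
        Real.exp (-(μ₁-μ₂)^2/(2*(a+b)))) *
      Real.exp (-((a+b)/(2*a*b)) * (x - (b*μ₁+a*μ₂)/(a+b))^2) := by
  have hab : (0:ℝ) < a + b := by linarith
  unfold gaussianDensity
  rw [mul_mul_mul_comm, ← Real.exp_add, mul_assoc (_*_), ← Real.exp_add]
  congr 1
  congr 1
  field_simp
  ring

lemma gaussian_prod_integrable (μ₁ μ₂ a b : ℝ) (ha : 0 < a) (hb : 0 < b) :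
    Integrable (fun x => gaussianDensity x μ₁ a * gaussianDensity x μ₂ b) := by
  have hp : 0 < (a+b)/(2*a*b) := by positivity
  simp only [fun x => gaussian_prod x μ₁ μ₂ a b ha hb]
  exact (integrable_exp_shift _ _ hp).const_mul _

lemma gaussian_const_eq (a b : ℝ) (ha : 0 < a) (hb : 0 < b) :
    (Real.sqrt (2*Real.pi*a))⁻¹ * (Real.sqrt (2*Real.pi*b))⁻¹ *
      Real.sqrt (Real.pi / ((a+b)/(2*a*b))) = (Real.sqrt (2*Real.pi*(a+b)))⁻¹ := by
  have hπ := Real.pi_pos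
  rw [← Real.sqrt_inv, ← Real.sqrt_inv, ← Real.sqrt_mul (by positivity),
    ← Real.sqrt_mul (by positivity), ← Real.sqrt_inv]
  congr 1
  field_simp

lemma gaussian_prod_integral (μ₁ μ₂ a b : ℝ) (ha : 0 < a) (hb : 0 < b) :
    ∫ x : ℝ, gaussianDensity x μ₁ a * gaussianDensity x μ₂ b =
      (Real.sqrt (2*Real.pi*(a+b)))⁻¹ * Real.exp (-(μ₁-μ₂)^2/(2*(a+b))) := by
  have hp : 0 < (a+b)/(2*a*b) := by positivity
  simp only [fun x => gaussian_prod x μ₁ μ₂ a b ha hb]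
  rw [MeasureTheory.integral_const_mul, integral_exp_shift _ _ hp]
  rw [← gaussian_const_eq a b ha hb]
  ring

lemma key_ineq (ν a b : ℝ) (hν : 0 < ν) (ha : ν ≤ a) (hb : ν ≤ b) :
    (Real.sqrt a)⁻¹ + (Real.sqrt b)⁻¹ - 2 * (Real.sqrt ((a+b)/2))⁻¹ ≤
      (3/16) * (ν^2 * Real.sqrt ν)⁻¹ * (a-b)^2 := by
  have ha0 : (0:ℝ) < a := lt_of_lt_of_le hν ha
  have hb0 : (0:ℝ) < b := lt_of_lt_of_le hν hb
  set r := Real.sqrt ν with hrdef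
  have hr0 : 0 < r := Real.sqrt_pos.mpr hν
  have hr2 : r^2 = ν := Real.sq_sqrt hν.le
  set α := Real.sqrt a with hαdef
  set β := Real.sqrt b with hβdef
  set γ := Real.sqrt ((a+b)/2) with hγdef
  have hα : r ≤ α := Real.sqrt_le_sqrt ha
  have hβ : r ≤ β := Real.sqrt_le_sqrt hb
  have hγ : r ≤ γ := Real.sqrt_le_sqrt (by linarith)
  have hα2 : α^2 = a := Real.sq_sqrt ha0.le
  have hβ2 : β^2 = b := Real.sq_sqrt hb0.le
  have hγ2 : γ^2 = (a+b)/2 := Real.sq_sqrt (by linarith)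
  have hα0 : 0 < α := lt_of_lt_of_le hr0 hα
  have hβ0 : 0 < β := lt_of_lt_of_le hr0 hβ
  have hγ0 : 0 < γ := lt_of_lt_of_le hr0 hγ
  have hL : α⁻¹ + β⁻¹ - 2 * γ⁻¹ = (γ*(α+β) - 2*α*β)/(α*β*γ) := by
    field_simp; ring
  have hN : γ*(α+β) - 2*α*β ≤ (3/4)*(α-β)^2 := by
    nlinarith [sq_nonneg (2*γ - (α+β)), hγ2, hα2, hβ2]
  have hden : r^3 ≤ α*β*γ := by
    have h1 : r*r ≤ α*β := mul_le_mul hα hβ hr0.le hα0.le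
    have h2 : (r*r)*r ≤ (α*β)*γ := mul_le_mul h1 hγ hr0.le (by positivity)
    calc r^3 = r*r*r := by ring
      _ ≤ α*β*γ := h2
  have hden0 : (0:ℝ) < α*β*γ := by positivity
  have habf : a - b = (α-β)*(α+β) := by rw [← hα2, ← hβ2]; ring
  have hy : (α-β)^2 * (4*ν) ≤ (a-b)^2 := by
    have h1 : (2*r)^2 ≤ (α+β)^2 := by nlinarith
    have h2 : (α-β)^2 * (2*r)^2 ≤ (α-β)^2 * (α+β)^2 :=
      mul_le_mul_of_nonneg_left h1 (sq_nonneg _)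
    calc (α-β)^2 * (4*ν) = (α-β)^2 * (2*r)^2 := by rw [← hr2]; ring
      _ ≤ (α-β)^2 * (α+β)^2 := h2
      _ = (a-b)^2 := by rw [habf]; ring
  rw [hL]
  calc (γ*(α+β) - 2*α*β)/(α*β*γ) ≤ ((3/4)*(α-β)^2)/(α*β*γ) :=
        (div_le_div_iff_of_pos_right hden0).mpr hN
      _ ≤ ((3/4)*(α-β)^2)/(r^3) :=
        div_le_div_of_nonneg_left (by positivity) (by positivity) hden
      _ ≤ (3/16) * (ν^2 * r)⁻¹ * (a-b)^2 := by
        rw [← hr2, div_le_iff₀ (by positivity)]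
        have e1 : (3:ℝ)/16 * (((r^2)^2*r))⁻¹ * (a-b)^2 * r^3 = (3/16) * (a-b)^2 / (r^2) := by
          rw [show ((r^2)^2*r : ℝ) = r^5 by ring]
          field_simp
        rw [e1, le_div_iff₀ (by positivity)]
        have e2 : (α-β)^2 * r^2 = (α-β)^2 * ν := by rw [hr2]
        nlinarith [hy, e2]

theorem gaussianDensity_L2_time_regularity
    (T ν L : ℝ) (hT : 0 < T) (hν : 0 < ν) (hL : 0 < L)
    (μ σ2 : ℝ → ℝ)
    (hμ : LipschitzOnWith (Real.toNNReal L) μ (Set.Icc 0 T))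
    (hσ2 : LipschitzOnWith (Real.toNNReal L) σ2 (Set.Icc 0 T))
    (hσν : ∀ t ∈ Set.Icc (0 : ℝ) T, ν ≤ σ2 t) :
    ∃ C : ℝ, 0 < C ∧ ∀ s ∈ Set.Icc (0 : ℝ) T, ∀ t ∈ Set.Icc (0 : ℝ) T,
      ∫ x : ℝ, (gaussianDensity x (μ t) (σ2 t) - gaussianDensity x (μ s) (σ2 s)) ^ 2 ≤
        C * (t - s) ^ 2 := by
  set K1 : ℝ := (2*Real.sqrt Real.pi)⁻¹ * ((3/16) * (ν^2 * Real.sqrt ν)⁻¹) with hK1def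
  set K2 : ℝ := (Real.sqrt ν)⁻¹ / (2*ν) * (2*Real.sqrt Real.pi)⁻¹ with hK2def
  have hπ := Real.pi_pos
  have hK1 : 0 < K1 := by positivity
  have hK2 : 0 < K2 := by positivity
  refine ⟨L^2 * (K1 + K2), by positivity, fun s hs t ht => ?_⟩
  set a := σ2 t with hadef
  set b := σ2 s with hbdef
  have ha : ν ≤ a := hσν t ht
  have hb : ν ≤ b := hσν s hs
  have ha0 : 0 < a := lt_of_lt_of_le hν ha
  have hb0 : 0 < b := lt_of_lt_of_le hν hb
  set d : ℝ := μ t - μ s with hddef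
  -- Lipschitz bounds
  have hd2 : d^2 ≤ L^2 * (t-s)^2 := by
    rw [hddef]
    have h := hμ.dist_le_mul t ht s hs
    rw [Real.dist_eq, Real.dist_eq, Real.coe_toNNReal L hL.le] at h
    nlinarith [mul_self_le_mul_self (abs_nonneg (μ t - μ s)) h,
      sq_abs (μ t - μ s), sq_abs (t - s), abs_nonneg (t-s), hL.le]
  have hab2 : (a-b)^2 ≤ L^2 * (t-s)^2 := by
    rw [hadef, hbdef]
    have h := hσ2.dist_le_mul t ht s hs
    rw [Real.dist_eq, Real.dist_eq, Real.coe_toNNReal L hL.le] at h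
    nlinarith [mul_self_le_mul_self (abs_nonneg (σ2 t - σ2 s)) h,
      sq_abs (σ2 t - σ2 s), sq_abs (t - s), abs_nonneg (t-s), hL.le]
  -- integrability
  have hff := gaussian_prod_integrable (μ t) (μ t) a a ha0 ha0
  have hgg := gaussian_prod_integrable (μ s) (μ s) b b hb0 hb0
  have hfg := gaussian_prod_integrable (μ t) (μ s) a b ha0 hb0
  -- compute the integral
  have h1 : ∫ x : ℝ, (gaussianDensity x (μ t) a - gaussianDensity x (μ s) b) ^ 2
      = (∫ x : ℝ, gaussianDensity x (μ t) a * gaussianDensity x (μ t) a)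
        + (∫ x : ℝ, gaussianDensity x (μ s) b * gaussianDensity x (μ s) b)
        - 2 * ∫ x : ℝ, gaussianDensity x (μ t) a * gaussianDensity x (μ s) b := by
    have e1 : ∫ x : ℝ, ((gaussianDensity x (μ t) a * gaussianDensity x (μ t) a
          + gaussianDensity x (μ s) b * gaussianDensity x (μ s) b)
          - 2 * (gaussianDensity x (μ t) a * gaussianDensity x (μ s) b))
        = (∫ x : ℝ, gaussianDensity x (μ t) a * gaussianDensity x (μ t) a)
          + (∫ x : ℝ, gaussianDensity x (μ s) b * gaussianDensity x (μ s) b)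
          - 2 * ∫ x : ℝ, gaussianDensity x (μ t) a * gaussianDensity x (μ s) b := by
      have hsum : Integrable (fun x => gaussianDensity x (μ t) a * gaussianDensity x (μ t) a
          + gaussianDensity x (μ s) b * gaussianDensity x (μ s) b) := hff.add hgg
      have h2fg : Integrable (fun x => 2 * (gaussianDensity x (μ t) a * gaussianDensity x (μ s) b)) :=
        hfg.const_mul 2
      rw [MeasureTheory.integral_sub hsum h2fg,
        MeasureTheory.integral_add hff hgg, MeasureTheory.integral_const_mul]
    rw [← e1]
    exact integral_congr_ae (Filter.Eventually.of_forall fun x => by ring)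
  rw [h1, gaussian_prod_integral _ _ _ _ ha0 ha0, gaussian_prod_integral _ _ _ _ hb0 hb0,
    gaussian_prod_integral _ _ _ _ ha0 hb0]
  simp only [sub_self, ne_eq, OfNat.ofNat_ne_zero, not_false_eq_true, zero_pow, neg_zero,
    zero_div, Real.exp_zero, mul_one]
  -- rewrite the square roots
  have hsa : Real.sqrt (2*Real.pi*(a+a)) = 2*Real.sqrt Real.pi*Real.sqrt a := by
    rw [show 2*Real.pi*(a+a) = (2*Real.sqrt Real.pi*Real.sqrt a)^2 by
      rw [mul_pow, mul_pow, Real.sq_sqrt Real.pi_pos.le, Real.sq_sqrt ha0.le]; ring,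
      Real.sqrt_sq (by positivity)]
  have hsb : Real.sqrt (2*Real.pi*(b+b)) = 2*Real.sqrt Real.pi*Real.sqrt b := by
    rw [show 2*Real.pi*(b+b) = (2*Real.sqrt Real.pi*Real.sqrt b)^2 by
      rw [mul_pow, mul_pow, Real.sq_sqrt Real.pi_pos.le, Real.sq_sqrt hb0.le]; ring,
      Real.sqrt_sq (by positivity)]
  have hsm : Real.sqrt (2*Real.pi*(a+b)) = 2*Real.sqrt Real.pi*Real.sqrt ((a+b)/2) := by
    rw [show 2*Real.pi*(a+b) = (2*Real.sqrt Real.pi*Real.sqrt ((a+b)/2))^2 by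
      rw [mul_pow, mul_pow, Real.sq_sqrt Real.pi_pos.le, Real.sq_sqrt (by linarith)]; ring,
      Real.sqrt_sq (by positivity)]
  rw [hsa, hsb, hsm]
  set sp := Real.sqrt Real.pi with hspdef
  set sa := Real.sqrt a with hsadef
  set sb := Real.sqrt b with hsbdef
  set sm := Real.sqrt ((a+b)/2) with hsmdef
  rw [mul_inv (2*sp) sa, mul_inv (2*sp) sb, mul_inv (2*sp) sm]
  set e := Real.exp (-d^2 / (2*(a+b))) with hedef
  have hsp0 : 0 < sp := Real.sqrt_pos.mpr Real.pi_pos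
  have hsm0 : 0 < sm := Real.sqrt_pos.mpr (by linarith)
  have hsν : Real.sqrt ν ≤ sm := Real.sqrt_le_sqrt (by linarith)
  have hsν0 : 0 < Real.sqrt ν := Real.sqrt_pos.mpr hν
  -- bound the variance part
  have hA : (2*sp)⁻¹*sa⁻¹ + (2*sp)⁻¹*sb⁻¹ - 2*((2*sp)⁻¹*sm⁻¹) ≤ K1 * (a-b)^2 := by
    have hk := key_ineq ν a b hν ha hb
    have h2 : (0:ℝ) ≤ (2*sp)⁻¹ := by positivity
    have := mul_le_mul_of_nonneg_left hk h2
    rw [hK1def]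
    linarith [this]
  -- bound the mean part
  have hB : 2*((2*sp)⁻¹*sm⁻¹) * (1 - e) ≤ K2 * d^2 := by
    have hE : 1 - e ≤ d^2/(2*(a+b)) := by
      have h := Real.add_one_le_exp (-(d^2/(2*(a+b))))
      rw [hedef, neg_div]
      linarith
    have hc0 : (0:ℝ) ≤ 2*((2*sp)⁻¹*sm⁻¹) := by positivity
    calc 2*((2*sp)⁻¹*sm⁻¹) * (1 - e) ≤ 2*((2*sp)⁻¹*sm⁻¹) * (d^2/(2*(a+b))) :=
          mul_le_mul_of_nonneg_left hE hc0
      _ = sm⁻¹ * (d^2/(a+b)) * (2*sp)⁻¹ := by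
          field_simp
      _ ≤ (Real.sqrt ν)⁻¹ * (d^2/(2*ν)) * (2*sp)⁻¹ := by
          have hi1 : sm⁻¹ ≤ (Real.sqrt ν)⁻¹ := inv_anti₀ hsν0 hsν
          have hi2 : d^2/(a+b) ≤ d^2/(2*ν) :=
            div_le_div_of_nonneg_left (sq_nonneg d) (by positivity) (by linarith)
          have hi3 : sm⁻¹ * (d^2/(a+b)) ≤ (Real.sqrt ν)⁻¹ * (d^2/(2*ν)) :=
            mul_le_mul hi1 hi2 (by positivity) (by positivity)
          exact mul_le_mul_of_nonneg_right hi3 (by positivity)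
      _ = K2 * d^2 := by rw [hK2def]; field_simp
  -- combine
  have hfinal1 := mul_le_mul_of_nonneg_left hab2 hK1.le
  have hfinal2 := mul_le_mul_of_nonneg_left hd2 hK2.le
  clear_value K1 K2 a b d sp sa sb sm e
  linarith [hA, hB, hfinal1, hfinal2]
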